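/- If a configuration pref is terminal for the protocol SSMM, i.e., no vertex of G is activable (for every vertex v none of the guards G_M(v), G_S(v), G_A(v) holds), then the edge set M(pref) is a maximal matching of G. -/

import Mathlib

variable {V : Type*} [Fintype V] [DecidableEq V]

/-- A configuration: every preference points to a neighbor. -/
def IsConfig (G : SimpleGraph V) (pref : V → Option V) : Prop :=
  ∀ v u : V, pref v = some u → G.Adj v u

/-- `v` proposed to a neighbor `u` which has not answered yet. -/
def Proposition (G : SimpleGraph V) (pref : V → Option V) (v : V) : Prop :=
  ∃ u : V, G.Adj v u ∧ pref v = some u ∧ pref u = none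

/-- `v` proposed to a neighbor `u` which proposed `v` back. -/
def Married (G : SimpleGraph V) (pref : V → Option V) (v : V) : Prop :=
  ∃ u : V, G.Adj v u ∧ pref v = some u ∧ pref u = some v

/-- `v` proposed to a neighbor `u` which proposed someone else. -/
def Condemned (G : SimpleGraph V) (pref : V → Option V) (v : V) : Prop :=
  ∃ u : V, G.Adj v u ∧ ∃ w : V, pref v = some u ∧ pref u = some w ∧ w ≠ v

/-- `v` has no hope of marriage: all its neighbors are married. -/
def Dead (G : SimpleGraph V) (pref : V → Option V) (v : V) : Prop :=
  pref v = none ∧ ∀ u : V, G.Adj v u → Married G pref u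

/-- `v` proposed no one and some neighbor is not married. -/
def Single (G : SimpleGraph V) (pref : V → Option V) (v : V) : Prop :=
  pref v = none ∧ ∃ u : V, G.Adj v u ∧ ¬ Married G pref u

/-- Local legitimacy predicate. -/
def Spec (G : SimpleGraph V) (pref : V → Option V) (v : V) : Prop :=
  Married G pref v ∨ Dead G pref v

/-- The matching set `M(pref)`: edges of `G` whose endpoints prefer each other. -/
def matchSet (G : SimpleGraph V) (pref : V → Option V) : Set (Sym2 V) :=
  {e | e ∈ G.edgeSet ∧ ∃ u w : V, e = s(u, w) ∧ pref u = some w ∧ pref w = some u}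

/-- `M` is a matching of `H`: a set of edges of `H` such that every vertex is
incident to at most one edge of `M`. -/
def IsMatchingOf (H : SimpleGraph V) (M : Set (Sym2 V)) : Prop :=
  M ⊆ H.edgeSet ∧ ∀ v : V, ∀ e ∈ M, ∀ f ∈ M, v ∈ e → v ∈ f → e = f

/-- `M` is a maximal matching of `H`: no matching of `H` strictly contains it. -/
def IsMaximalMatchingOf (H : SimpleGraph V) (M : Set (Sym2 V)) : Prop :=
  IsMatchingOf H M ∧ ¬ ∃ M' : Set (Sym2 V), IsMatchingOf H M' ∧ M ⊂ M'

/-- The subgraph of `G` induced by the vertex set `S` (as a graph on `V`). -/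
def inducedOn (G : SimpleGraph V) (S : Set V) : SimpleGraph V where
  Adj u v := G.Adj u v ∧ u ∈ S ∧ v ∈ S
  symm := ⟨fun u v ⟨h, hu, hv⟩ => ⟨h.symm, hv, hu⟩⟩
  loopless := ⟨fun v ⟨h, _, _⟩ => G.irrefl h⟩

/-- Guard of the marriage rule of SSMM. -/
def GuardM (G : SimpleGraph V) (pref : V → Option V) (v : V) : Prop :=
  pref v = none ∧ ∃ u : V, G.Adj v u ∧ pref u = some v

/-- Guard of the seduction rule of SSMM. -/
def GuardS (G : SimpleGraph V) (pref : V → Option V) (v : V) : Prop :=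
  pref v = none ∧ (∀ u : V, G.Adj v u → pref u ≠ some v) ∧
    ∃ u : V, G.Adj v u ∧ pref u = none

/-- Guard of the abandonment rule of SSMM. -/
def GuardA (G : SimpleGraph V) (pref : V → Option V) (v : V) : Prop :=
  ∃ u : V, G.Adj v u ∧ pref v = some u ∧ pref u ≠ some v ∧ pref u ≠ none

/-- A vertex is activable if at least one guard of SSMM holds at it. -/
def Activable (G : SimpleGraph V) (pref : V → Option V) (v : V) : Prop :=
  GuardM G pref v ∨ GuardS G pref v ∨ GuardA G pref v

theorem IsMatchingOf.isMaximalMatchingOf {α : Type*} {H : SimpleGraph α} {M : Set (Sym2 α)}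
    (hM : IsMatchingOf H M) (hcover : ∀ e ∈ H.edgeSet, ∃ x ∈ e, ∃ f ∈ M, x ∈ f) :
    IsMaximalMatchingOf H M := by
  refine ⟨hM, ?_⟩
  rintro ⟨M', hM', hMM'⟩
  obtain ⟨e, heM', heM⟩ := Set.exists_of_ssubset hMM'
  obtain ⟨x, hxe, f, hfM, hxf⟩ := hcover e (hM'.1 heM')
  exact heM (hM'.2 x e heM' f (hMM'.1 hfM) hxe hxf ▸ hfM)

section Preferences

variable {α : Type*} {G : SimpleGraph α} {pref : α → Option α}

theorem exists_eq_mk_of_mem_matchSet {e : Sym2 α} (he : e ∈ matchSet G pref) {v : α}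
    (hv : v ∈ e) : ∃ w, pref v = some w ∧ pref w = some v ∧ e = s(v, w) := by
  obtain ⟨-, u, w, rfl, hu, hw⟩ := he
  rcases Sym2.mem_iff.mp hv with rfl | rfl
  · exact ⟨w, hu, hw, rfl⟩
  · exact ⟨u, hw, hu, Sym2.eq_swap⟩

theorem isMatchingOf_matchSet : IsMatchingOf G (matchSet G pref) := by
  refine ⟨fun e he => he.1, fun v e he f hf hve hvf => ?_⟩
  obtain ⟨w, hvw, -, rfl⟩ := exists_eq_mk_of_mem_matchSet he hve
  obtain ⟨w', hvw', -, rfl⟩ := exists_eq_mk_of_mem_matchSet hf hvf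
  rw [Option.some_inj.mp (hvw.symm.trans hvw')]

theorem IsConfig.mk_mem_matchSet (hconf : IsConfig G pref) {v w : α}
    (hvw : pref v = some w) (hwv : pref w = some v) : s(v, w) ∈ matchSet G pref :=
  ⟨hconf v w hvw, v, w, rfl, hvw, hwv⟩

/-- A proposal `v → u` is answered: `u` cannot stay unmarried (marriage rule at `u`)
and cannot prefer a third vertex (abandonment rule at `v`). -/
theorem IsConfig.pref_eq_some_of_pref_eq_some (hconf : IsConfig G pref) {v u : α}
    (hGM : ¬ GuardM G pref u) (hGA : ¬ GuardA G pref v) (hvu : pref v = some u) :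
    pref u = some v := by
  by_contra hne
  have hadj := hconf v u hvu
  cases hu : pref u with
  | none => exact hGM ⟨hu, v, hadj.symm, hvu⟩
  | some w => exact hGA ⟨u, hadj, hvu, hne, by simp [hu]⟩

theorem pref_ne_none_of_adj {v u : α} (hGM : ¬ GuardM G pref v) (hGS : ¬ GuardS G pref v)
    (hv : pref v = none) (hadj : G.Adj v u) : pref u ≠ none := fun hu =>
  hGS ⟨hv, fun x hx hxv => hGM ⟨hv, x, hx, hxv⟩, u, hadj, hu⟩

end Preferences

/-- in a terminal configuration of SSMM (no vertex activable),
`M(pref)` is a maximal matching of `G`. -/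
theorem terminal_maximal_matching (G : SimpleGraph V) (pref : V → Option V)
    (hconf : IsConfig G pref)
    (hterm : ∀ v : V, ¬ GuardM G pref v ∧ ¬ GuardS G pref v ∧ ¬ GuardA G pref v) :
    IsMaximalMatchingOf G (matchSet G pref) := by
  have matched : ∀ v w, pref v = some w → s(v, w) ∈ matchSet G pref := fun v w hvw =>
    hconf.mk_mem_matchSet hvw
      (hconf.pref_eq_some_of_pref_eq_some (hterm w).1 (hterm v).2.2 hvw)
  refine isMatchingOf_matchSet.isMaximalMatchingOf fun e he => ?_
  induction e using Sym2.inductionOn with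
  | hf a b =>
    cases ha : pref a with
    | some w => exact ⟨a, Sym2.mem_mk_left a b, _, matched a w ha, Sym2.mem_mk_left a w⟩
    | none =>
      obtain ⟨w, hb⟩ := Option.ne_none_iff_exists'.mp
        (pref_ne_none_of_adj (hterm a).1 (hterm a).2.1 ha he)
      exact ⟨b, Sym2.mem_mk_right a b, _, matched b w hb, Sym2.mem_mk_left b w⟩
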